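/- Let φ : F → K be a homomorphism of fields, let M be an n×m matrix over F, and let R be the rook matrix of M over F. Then the rook matrix over K of the matrix obtained from M by applying φ to every entry equals the matrix obtained from R by applying φ to every entry. (The rook matrix is unchanged under extension of the base field.) -/

import Mathlib

/-- A square matrix is unitriangular if it is upper triangular with 1's on the diagonal. -/
def Matrix.IsUnitriangular {n : ℕ} {R : Type*} [Zero R] [One R]
    (A : Matrix (Fin n) (Fin n) R) : Prop :=
  (∀ i, A i i = 1) ∧ ∀ i j : Fin n, j < i → A i j = 0

/-- A matrix is a rook matrix if every row and every column contains
at most one nonzero entry. -/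
def Matrix.IsRook {n m : ℕ} {F : Type*} [Zero F]
    (R : Matrix (Fin n) (Fin m) F) : Prop :=
  (∀ i j j', R i j ≠ 0 → R i j' ≠ 0 → j = j') ∧
  (∀ i i' j, R i j ≠ 0 → R i' j ≠ 0 → i = i')

/-!
Put `X = U * R₁ = R₂ * W` with `U`, `W` unitriangular. Since `R₁` is a rook matrix, its
nonzero entries are exactly the lowest nonzero entries of the columns of `X`; dually, those
of `R₂` are the leftmost nonzero entries of the rows of `X`. A lowest counterexample to
`R₁ r j ≠ 0 → R₂ r j ≠ 0` would produce two nonzero entries of `R₂` in one column, and a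
leftmost counterexample to the converse two nonzero entries of `R₁` in one row. So `R₁` and
`R₂` have the same support, where both agree with `X`. Two rook matrices in the
unitriangular orbit of `M` are related in this way, and `φ` maps the orbit of `M` into
that of `M.map φ`.
-/

namespace Matrix

variable {α β : Type*} {n m : ℕ}

section IsUpperTriangular

variable {ι κ : Type*} [Fintype ι] [LinearOrder ι]

theorem IsUpperTriangular.mul_apply_self [NonUnitalNonAssocSemiring α] {P Q : Matrix ι ι α}
    (hP : P.IsUpperTriangular) (hQ : Q.IsUpperTriangular) (i : ι) :
    (P * Q) i i = P i i * Q i i := by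
  rw [mul_apply, Finset.sum_eq_single i]
  · intro k _ hk
    rcases hk.lt_or_gt with h | h
    · rw [hP h, zero_mul]
    · rw [hQ h, mul_zero]
  · simp

theorem IsUpperTriangular.exists_row_ge_of_mul_apply_ne_zero [NonUnitalNonAssocSemiring α]
    {U : Matrix ι ι α} (hU : U.IsUpperTriangular) {R : Matrix ι κ α} {i : ι} {j : κ}
    (h : (U * R) i j ≠ 0) : ∃ r, i ≤ r ∧ R r j ≠ 0 := by
  rw [mul_apply] at h
  by_contra! hR
  refine h (Finset.sum_eq_zero fun k _ => ?_)
  rcases lt_or_ge k i with hk | hk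
  · rw [hU hk, zero_mul]
  · rw [hR k hk, mul_zero]

theorem IsUpperTriangular.exists_col_le_of_mul_apply_ne_zero [NonUnitalNonAssocSemiring α]
    {W : Matrix ι ι α} (hW : W.IsUpperTriangular) {R : Matrix κ ι α} {i : κ} {j : ι}
    (h : (R * W) i j ≠ 0) : ∃ c, c ≤ j ∧ R i c ≠ 0 := by
  rw [mul_apply] at h
  by_contra! hR
  refine h (Finset.sum_eq_zero fun k _ => ?_)
  rcases lt_or_ge j k with hk | hk
  · rw [hW hk, mul_zero]
  · rw [hR k hk, zero_mul]

end IsUpperTriangular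

namespace IsUnitriangular

theorem isUpperTriangular [Zero α] [One α] {A : Matrix (Fin n) (Fin n) α}
    (hA : A.IsUnitriangular) : A.IsUpperTriangular :=
  fun i j h => hA.2 i j h

theorem map [Zero α] [One α] [Zero β] [One β] {A : Matrix (Fin n) (Fin n) α}
    (hA : A.IsUnitriangular) {f : α → β} (hf₀ : f 0 = 0) (hf₁ : f 1 = 1) :
    (A.map f).IsUnitriangular :=
  ⟨fun i => by rw [map_apply, hA.1, hf₁], fun i j h => by rw [map_apply, hA.2 i j h, hf₀]⟩

theorem mul [NonAssocSemiring α] {A B : Matrix (Fin n) (Fin n) α}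
    (hA : A.IsUnitriangular) (hB : B.IsUnitriangular) : (A * B).IsUnitriangular :=
  ⟨fun i => by rw [hA.isUpperTriangular.mul_apply_self hB.isUpperTriangular, hA.1, hB.1, one_mul],
    fun _ _ h => hA.isUpperTriangular.mul hB.isUpperTriangular h⟩

theorem isUnit_det [CommRing α] {A : Matrix (Fin n) (Fin n) α} (hA : A.IsUnitriangular) :
    IsUnit A.det := by
  rw [det_of_isUpperTriangular hA.isUpperTriangular, Finset.prod_eq_one fun i _ => hA.1 i]
  exact isUnit_one

theorem inv [CommRing α] {A : Matrix (Fin n) (Fin n) α} (hA : A.IsUnitriangular) :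
    A⁻¹.IsUnitriangular := by
  have : Invertible A := invertibleOfIsUnitDet A hA.isUnit_det
  have hinv : A⁻¹.IsUpperTriangular :=
    blockTriangular_inv_of_blockTriangular hA.isUpperTriangular
  refine ⟨fun i => ?_, fun _ _ h => hinv h⟩
  have hii := congr_fun₂ (inv_mul_of_invertible A) i i
  rwa [hinv.mul_apply_self hA.isUpperTriangular, hA.1, mul_one, one_apply_eq] at hii

end IsUnitriangular

namespace IsRook

theorem map [Zero α] [Zero β] {R : Matrix (Fin n) (Fin m) α} (hR : R.IsRook) {f : α → β}
    (hf : f 0 = 0) : (R.map f).IsRook := by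
  have hne {x : α} (hx : f x ≠ 0) : x ≠ 0 := fun h => hx (h ▸ hf)
  exact ⟨fun i j j' h h' => hR.1 i j j' (hne h) (hne h'),
    fun i i' j h h' => hR.2 i i' j (hne h) (hne h')⟩

theorem apply_eq_zero_of_row_ne [Zero α] {R : Matrix (Fin n) (Fin m) α} (hR : R.IsRook)
    {r k : Fin n} {j : Fin m} (hrj : R r j ≠ 0) (hk : k ≠ r) : R k j = 0 :=
  not_imp_comm.1 (hR.2 k r j · hrj) hk

theorem apply_eq_zero_of_col_ne [Zero α] {R : Matrix (Fin n) (Fin m) α} (hR : R.IsRook)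
    {i : Fin n} {c k : Fin m} (hic : R i c ≠ 0) (hk : k ≠ c) : R i k = 0 :=
  not_imp_comm.1 (hR.1 i k c · hic) hk

section NonAssocSemiring

variable [NonAssocSemiring α] {R R₁ R₂ : Matrix (Fin n) (Fin m) α}
  {U : Matrix (Fin n) (Fin n) α} {W : Matrix (Fin m) (Fin m) α}

theorem unitriangular_mul_apply (hR : R.IsRook) (hU : U.IsUnitriangular) {r : Fin n}
    {j : Fin m} (hrj : R r j ≠ 0) : (U * R) r j = R r j := by
  rw [mul_apply, Finset.sum_eq_single r, hU.1, one_mul]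
  · exact fun k _ hk => by rw [hR.apply_eq_zero_of_row_ne hrj hk, mul_zero]
  · simp

theorem mul_unitriangular_apply (hR : R.IsRook) (hW : W.IsUnitriangular) {i : Fin n}
    {c : Fin m} (hic : R i c ≠ 0) : (R * W) i c = R i c := by
  rw [mul_apply, Finset.sum_eq_single c, hW.1, mul_one]
  · exact fun k _ hk => by rw [hR.apply_eq_zero_of_col_ne hic hk, zero_mul]
  · simp

theorem eq_of_unitriangular_mul_eq_mul_unitriangular (h₁ : R₁.IsRook) (h₂ : R₂.IsRook)
    (hU : U.IsUnitriangular) (hW : W.IsUnitriangular) (h : U * R₁ = R₂ * W) : R₁ = R₂ := by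
  have supp₁₂ (r : Fin n) : ∀ j, R₁ r j ≠ 0 → R₂ r j ≠ 0 := by
    induction r using WellFoundedGT.induction with | _ r ih
    intro j hrj
    have hX : (R₂ * W) r j ≠ 0 := by rwa [← h, h₁.unitriangular_mul_apply hU hrj]
    obtain ⟨c, hcj, hrc⟩ := hW.isUpperTriangular.exists_col_le_of_mul_apply_ne_zero hX
    rcases hcj.eq_or_lt with rfl | hcj
    · exact hrc
    have hX' : (U * R₁) r c ≠ 0 := by rwa [h, h₂.mul_unitriangular_apply hW hrc]
    obtain ⟨r', hrr', hr'c⟩ := hU.isUpperTriangular.exists_row_ge_of_mul_apply_ne_zero hX'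
    rcases hrr'.eq_or_lt with rfl | hrr'
    · exact absurd (h₁.1 r c j hr'c hrj) hcj.ne
    · exact absurd (h₂.2 r r' c hrc (ih r' hrr' c hr'c)) hrr'.ne
  have supp₂₁ (c : Fin m) : ∀ i, R₂ i c ≠ 0 → R₁ i c ≠ 0 := by
    induction c using WellFoundedLT.induction with | _ c ih
    intro i hic
    have hX : (U * R₁) i c ≠ 0 := by rwa [h, h₂.mul_unitriangular_apply hW hic]
    obtain ⟨r, hir, hrc⟩ := hU.isUpperTriangular.exists_row_ge_of_mul_apply_ne_zero hX
    rcases hir.eq_or_lt with rfl | hir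
    · exact hrc
    have hX' : (R₂ * W) r c ≠ 0 := by rwa [← h, h₁.unitriangular_mul_apply hU hrc]
    obtain ⟨c', hc'c, hrc'⟩ := hW.isUpperTriangular.exists_col_le_of_mul_apply_ne_zero hX'
    rcases hc'c.eq_or_lt with rfl | hc'c
    · exact absurd (h₂.2 i r c' hic hrc') hir.ne
    · exact absurd (h₁.1 r c' c (ih c' hc'c r hrc') hrc) hc'c.ne
  ext i j
  by_cases h0 : R₁ i j = 0
  · rw [h0, eq_comm]
    exact not_imp_not.1 (supp₂₁ j i) h0
  · calc R₁ i j = (U * R₁) i j := (h₁.unitriangular_mul_apply hU h0).symm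
      _ = (R₂ * W) i j := by rw [h]
      _ = R₂ i j := h₂.mul_unitriangular_apply hW (supp₁₂ i j h0)

end NonAssocSemiring

theorem eq_of_unitriangular_mul_mul_eq [CommRing α] {M R₁ R₂ : Matrix (Fin n) (Fin m) α}
    (h₁ : R₁.IsRook) (h₂ : R₂.IsRook) {A A' : Matrix (Fin n) (Fin n) α}
    {B B' : Matrix (Fin m) (Fin m) α} (hA : A.IsUnitriangular) (hB : B.IsUnitriangular)
    (hA' : A'.IsUnitriangular) (hB' : B'.IsUnitriangular)
    (e₁ : A * M * B = R₁) (e₂ : A' * M * B' = R₂) : R₁ = R₂ := by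
  refine h₁.eq_of_unitriangular_mul_eq_mul_unitriangular h₂ (hA'.mul hA.inv) (hB'.inv.mul hB) ?_
  rw [← e₁, ← e₂]
  simp only [Matrix.mul_assoc]
  rw [nonsing_inv_mul_cancel_left _ _ hA.isUnit_det,
    mul_nonsing_inv_cancel_left _ _ hB'.isUnit_det]

end IsRook

end Matrix

/-- The rook matrix is unchanged under extension of the base field: if `φ : F → K` is
a homomorphism of fields and `R` is the rook matrix of `M` over `F`, then the rook
matrix of `M.map φ` over `K` is `R.map φ`. -/
theorem rook_matrix_map_field_hom {F K : Type*} [Field F] [Field K] (φ : F →+* K)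
    {n m : ℕ} (M R : Matrix (Fin n) (Fin m) F) (hRrook : R.IsRook)
    (hRorb : ∃ (A : Matrix (Fin n) (Fin n) F) (B : Matrix (Fin m) (Fin m) F),
      A.IsUnitriangular ∧ B.IsUnitriangular ∧ A * M * B = R)
    (R' : Matrix (Fin n) (Fin m) K) (hR'rook : R'.IsRook)
    (hR'orb : ∃ (A : Matrix (Fin n) (Fin n) K) (B : Matrix (Fin m) (Fin m) K),
      A.IsUnitriangular ∧ B.IsUnitriangular ∧ A * M.map φ * B = R') :
    R' = R.map φ := by
  obtain ⟨A, B, hA, hB, hR⟩ := hRorb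
  obtain ⟨A', B', hA', hB', hR'⟩ := hR'orb
  refine hR'rook.eq_of_unitriangular_mul_mul_eq (hRrook.map φ.map_zero) hA' hB'
    (hA.map φ.map_zero φ.map_one) (hB.map φ.map_zero φ.map_one) hR' ?_
  rw [← hR, Matrix.map_mul, Matrix.map_mul]
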